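/- Let Q be an index set with at least two elements. Then the global set H_Q equals {X ⊆ ℕ : 1 ∈ X}. That is: (a) every product intersection set H_Q^S(A_q) contains 1; and (b) for every subset X ⊆ ℕ with 1 ∈ X, there exist a semigroup S and a Q-indexed family (A_q)_{q∈Q} of subsets of S such that H_Q^S(A_q) = X, i.e. for every h ∈ ℕ, (⋂_{q∈Q} A_q)^h = ⋂_{q∈Q} A_q^h if and only if h ∈ X. -/
import Mathlib

open Pointwise

def prodSet {S : Type*} [Mul S] (B : Set S) : ℕ → Set S
  | 0 => ∅
  | 1 => B
  | n + 2 => prodSet B (n + 1) * B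

abbrev G := Option (Bool × ℕ × ℕ)

def Gmul : G → G → G
  | some (t, n, i), some (t', n', j) =>
    if t = t' ∧ n = n' ∧ 1 ≤ i ∧ 1 ≤ j ∧ i + j ≤ n then
      some (if i + j = n then false else t, n, i + j)
    else none
  | _, _ => none

set_option maxHeartbeats 1000000 in
instance : Semigroup G where
  mul := Gmul
  mul_assoc := by
    rintro (_ | ⟨t, n, i⟩) (_ | ⟨t', n', j⟩) (_ | ⟨t'', n'', k⟩) <;>
      simp only [Gmul, HMul.hMul, Mul.mul] <;>
      split_ifs <;> simp_all [Nat.add_assoc] <;>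
      first
        | omega
        | (intros; omega)
        | (intros; simp_all; omega)
        | (split_ifs <;> simp_all [Nat.add_assoc] <;> omega)

@[simp] lemma Gmul_def (x y : G) : x * y = Gmul x y := rfl

lemma Gmul_some (t t' : Bool) (n n' i j : ℕ) :
    (some (t, n, i) : G) * some (t', n', j) =
      if t = t' ∧ n = n' ∧ 1 ≤ i ∧ 1 ≤ j ∧ i + j ≤ n then
        some (if i + j = n then false else t, n, i + j)
      else none := rfl

lemma prod_none (h : ℕ) (hh : 1 ≤ h) : prodSet ({none} : Set G) h = {none} := by
  induction h with
  | zero => omega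
  | succ m ih =>
    match m with
    | 0 => rfl
    | k + 1 =>
      rw [prodSet, ih (by omega)]
      ext x
      simp [Set.mem_mul, Gmul]

def Aset (X : Set ℕ) (t : Bool) : Set G :=
  insert none {x | ∃ n, n ∉ X ∧ 2 ≤ n ∧ x = some (t, n, 1)}

lemma prod_Aset (X : Set ℕ) (t : Bool) (h : ℕ) (hh : 1 ≤ h) :
    prodSet (Aset X t) h =
      insert (none : G)
        {x | ∃ n, n ∉ X ∧ 2 ≤ n ∧ h ≤ n ∧ x = some (if h = n then false else t, n, h)} := by
  induction h with
  | zero => omega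
  | succ m ih =>
    match m with
    | 0 =>
      show Aset X t = _
      unfold Aset
      ext x
      simp only [Set.mem_insert_iff, Set.mem_setOf_eq]
      constructor
      · rintro (rfl | ⟨n, hn, h2, rfl⟩)
        · exact Or.inl rfl
        · exact Or.inr ⟨n, hn, h2, by omega, by rw [if_neg (by omega)]⟩
      · rintro (rfl | ⟨n, hn, h2, _, rfl⟩)
        · exact Or.inl rfl
        · exact Or.inr ⟨n, hn, h2, by rw [if_neg (by omega)]⟩
    | k + 1 =>
      rw [prodSet, ih (by omega)]
      ext x
      simp only [Set.mem_mul, Set.mem_insert_iff, Set.mem_setOf_eq]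
      constructor
      · rintro ⟨a, (rfl | ⟨n, hn, h2, hkn, rfl⟩), b, hb, rfl⟩
        · left; rcases b with _ | b <;> rfl
        · rcases hb with rfl | ⟨n', hn', h2', rfl⟩
          · left; rfl
          · by_cases hkn' : k + 1 = n
            · rw [if_pos hkn', Gmul_some,
                if_neg (fun hc => absurd hc.2.2.2.2 (by omega))]
              left; rfl
            · rw [if_neg hkn', Gmul_some]
              by_cases hnn : n = n'
              · subst hnn
                have hc : t = t ∧ n = n ∧ 1 ≤ k + 1 ∧ 1 ≤ 1 ∧ k + 1 + 1 ≤ n :=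
                  ⟨rfl, rfl, by omega, le_refl 1, by omega⟩
                rw [if_pos hc]
                right
                exact ⟨n, hn, h2, by omega, rfl⟩
              · rw [if_neg (fun hc => hnn hc.2.1)]
                left; rfl
      · rintro (rfl | ⟨n, hn, h2, hle, rfl⟩)
        · exact ⟨none, Or.inl rfl, none, Or.inl rfl, rfl⟩
        · refine ⟨some (if k + 1 = n then false else t, n, k + 1),
            Or.inr ⟨n, hn, h2, by omega, rfl⟩,
            some (t, n, 1), Or.inr ⟨n, hn, h2, rfl⟩, ?_⟩
          have hkn : ¬(k + 1 = n) := by omega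
          have hc : t = t ∧ n = n ∧ 1 ≤ k + 1 ∧ 1 ≤ 1 ∧ k + 1 + 1 ≤ n :=
            ⟨rfl, rfl, by omega, le_refl 1, by omega⟩
          rw [if_neg hkn, Gmul_some, if_pos hc]

/-- Let `Q` be an index set with at least two elements.  Then the global set `H_Q` equals
`{X ⊆ ℕ : 1 ∈ X}` (with `ℕ = {1, 2, …}`):
(a) every product intersection set `H_Q^S(A_q)` contains `1`; and
(b) for every `X ⊆ ℕ` with `1 ∈ X` there exist a semigroup `S` and a `Q`-indexed family
`(A_q)_{q ∈ Q}` of subsets of `S` with `H_Q^S(A_q) = X`, i.e. for every `h ∈ ℕ`,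
`(⋂_q A_q)^h = ⋂_q A_q^h` if and only if `h ∈ X`. -/
theorem stmt_19 (Q : Type*) (hQ : ∃ q₁ q₂ : Q, q₁ ≠ q₂) :
    (∀ (S : Type) (_ : Semigroup S) (A : Q → Set S),
      1 ∈ {h : ℕ | 1 ≤ h ∧ prodSet (⋂ q, A q) h = ⋂ q, prodSet (A q) h}) ∧
    (∀ X : Set ℕ, 1 ∈ X →
      ∃ (S : Type) (_ : Semigroup S) (A : Q → Set S),
        ∀ h : ℕ, 1 ≤ h →
          (prodSet (⋂ q, A q) h = (⋂ q, prodSet (A q) h) ↔ h ∈ X)) := by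
  obtain ⟨q₁, q₂, hne⟩ := hQ
  constructor
  · intro S _ A
    exact ⟨le_refl 1, rfl⟩
  · intro X hX1
    classical
    refine ⟨G, inferInstance, fun q => if q = q₁ then Aset X false else Aset X true, ?_⟩
    intro h hh
    have hInter : (⋂ q, (if q = q₁ then Aset X false else Aset X true)) = ({none} : Set G) := by
      ext x
      simp only [Set.mem_iInter, Set.mem_singleton_iff]
      constructor
      · intro hx
        have h1 := hx q₁
        have h2 := hx q₂
        rw [if_pos rfl] at h1
        rw [if_neg (fun e => hne e.symm)] at h2
        simp only [Aset, Set.mem_insert_iff, Set.mem_setOf_eq] at h1 h2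
        rcases h1 with rfl | ⟨n, _, _, rfl⟩
        · rfl
        · rcases h2 with he | ⟨n', _, _, he⟩ <;> simp at he
      · rintro rfl q
        split_ifs <;> exact Or.inl rfl
    have hInterProd : (⋂ q, prodSet (if q = q₁ then Aset X false else Aset X true) h) =
        prodSet (Aset X false) h ∩ prodSet (Aset X true) h := by
      ext x
      simp only [Set.mem_iInter, Set.mem_inter_iff]
      constructor
      · intro hx
        have h1 := hx q₁
        have h2 := hx q₂
        rw [if_pos rfl] at h1
        rw [if_neg (fun e => hne e.symm)] at h2
        exact ⟨h1, h2⟩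
      · rintro ⟨h1, h2⟩ q
        split_ifs <;> assumption
    rw [hInter, hInterProd, prod_none h hh, prod_Aset X false h hh, prod_Aset X true h hh]
    constructor
    · intro heq
      by_contra hx
      have h2 : 2 ≤ h := by
        rcases Nat.lt_or_ge h 2 with h' | h'
        · interval_cases h
          exact absurd hX1 hx
        · exact h'
      have hmem : (some (false, h, h) : G) ∈
          (insert (none : G)
            {x | ∃ n, n ∉ X ∧ 2 ≤ n ∧ h ≤ n ∧ x = some (if h = n then false else false, n, h)}) ∩
          (insert (none : G)
            {x | ∃ n, n ∉ X ∧ 2 ≤ n ∧ h ≤ n ∧ x = some (if h = n then false else true, n, h)}) := by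
        constructor
        · exact Or.inr ⟨h, hx, h2, le_refl h, by rw [if_pos rfl]⟩
        · exact Or.inr ⟨h, hx, h2, le_refl h, by rw [if_pos rfl]⟩
      rw [← heq] at hmem
      simp at hmem
    · intro hXh
      ext x
      simp only [Set.mem_singleton_iff, Set.mem_inter_iff, Set.mem_insert_iff, Set.mem_setOf_eq]
      constructor
      · rintro rfl
        exact ⟨Or.inl rfl, Or.inl rfl⟩
      · rintro ⟨(rfl | ⟨n, hn, h2, hle, rfl⟩), hright⟩
        · rfl
        · rcases hright with he | ⟨n', hn', h2', hle', he⟩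
          · exact absurd he (by simp)
          · rw [Option.some_inj, Prod.mk.injEq, Prod.mk.injEq] at he
            obtain ⟨hteq, hneq, -⟩ := he
            subst hneq
            exfalso
            by_cases hhn : h = n
            · exact hn (hhn ▸ hXh)
            · rw [if_neg hhn, if_neg hhn] at hteq
              exact Bool.false_ne_true hteq
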